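/- arXiv:math/0503070 — 2 statements merged into one kernel-verified Lean document; each statement's English description precedes it below -/
import Mathlib

section
/- Let Q be a symmetric positive semidefinite q×q real matrix with Moore-Penrose pseudoinverse Q⁺. For γ > 0 define J_γ(Y) = (1/2)·Yᵀ(γI + Q)⁻¹Y. If Y ∈ ℝ^q satisfies Q⁺QY ≠ Y, then J_γ(Y) → ∞ as γ → 0⁺. -/
open Matrix Filter Topology

/-- Cauchy–Schwarz for a positive semidefinite real matrix. -/
lemma psd_cauchy_schwarz {n : ℕ} {A : Matrix (Fin n) (Fin n) ℝ} (hA : A.PosSemidef)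
    (x y : Fin n → ℝ) :
    (x ⬝ᵥ A.mulVec y) ^ 2 ≤ (x ⬝ᵥ A.mulVec x) * (y ⬝ᵥ A.mulVec y) := by
  obtain ⟨B, rfl⟩ : ∃ B : Matrix (Fin n) (Fin n) ℝ, A = Bᴴ * B := by
    open scoped MatrixOrder in
    obtain ⟨X, hX, -, hXX⟩ :=
      CFC.exists_sqrt_of_isSelfAdjoint_of_quasispectrumRestricts hA.isHermitian
        (QuasispectrumRestricts.nnreal_of_nonneg hA.nonneg)
    refine ⟨X, ?_⟩
    rw [← hXX]
    congr 1
    exact hX.star_eq.symm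
  have key : ∀ u v : Fin n → ℝ,
      u ⬝ᵥ (Bᴴ * B).mulVec v = (B.mulVec u) ⬝ᵥ (B.mulVec v) := by
    intro u v
    rw [← Matrix.mulVec_mulVec, Matrix.dotProduct_mulVec, ← Matrix.mulVec_transpose]
    simp
  rw [key, key, key]
  have := Finset.sum_mul_sq_le_sq_mul_sq Finset.univ (B.mulVec x) (B.mulVec y)
  simpa [dotProduct, pow_two, Finset.sum_mul_sum, mul_comm, mul_assoc, mul_left_comm]
    using this

/-- For a symmetric positive semidefinite matrix `Q` with Moore–Penrose pseudoinverse `Qp`,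
if `Q⁺QY ≠ Y` then `J_γ(Y) = (1/2)·Yᵀ(γI+Q)⁻¹Y → ∞` as `γ → 0⁺`. -/
theorem stmt1 {q : ℕ} (Q Qp : Matrix (Fin q) (Fin q) ℝ)
    (hQ : Q.PosSemidef)
    (hp1 : Q * Qp * Q = Q) (hp2 : Qp * Q * Qp = Qp)
    (hp3 : (Q * Qp)ᵀ = Q * Qp) (hp4 : (Qp * Q)ᵀ = Qp * Q)
    (Y : Fin q → ℝ) (hY : (Qp * Q).mulVec Y ≠ Y) :
    Tendsto
      (fun γ : ℝ =>
        (1 / 2) * (Y ⬝ᵥ (γ • (1 : Matrix (Fin q) (Fin q) ℝ) + Q)⁻¹.mulVec Y))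
      (𝓝[>] 0) atTop := by
  -- the projection onto the kernel part
  set P : Matrix (Fin q) (Fin q) ℝ := 1 - Qp * Q with hP
  set v : Fin q → ℝ := P.mulVec Y with hv
  have hPsymm : Pᵀ = P := by simp [hP, Matrix.transpose_sub, hp4]
  have hPidem : P * P = P := by
    have h : (Qp * Q) * (Qp * Q) = Qp * Q := by
      calc (Qp * Q) * (Qp * Q) = (Qp * Q * Qp) * Q := by
            simp only [Matrix.mul_assoc]
      _ = Qp * Q := by rw [hp2]
    simp only [hP, Matrix.sub_mul, Matrix.mul_sub, Matrix.one_mul, Matrix.mul_one, h]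
    abel
  have hQP : Q * P = 0 := by
    simp [hP, Matrix.mul_sub, ← Matrix.mul_assoc, hp1]
  have symm_dot : ∀ (M : Matrix (Fin q) (Fin q) ℝ), Mᵀ = M → ∀ x y : Fin q → ℝ,
      M.mulVec x ⬝ᵥ y = x ⬝ᵥ M.mulVec y := by
    intro M hM x y
    rw [Matrix.dotProduct_mulVec]
    congr 1
    rw [← Matrix.vecMul_transpose, hM]
  have hvY : v ⬝ᵥ Y = v ⬝ᵥ v := by
    have h1 : v ⬝ᵥ v = Y ⬝ᵥ v := by
      calc v ⬝ᵥ v = P.mulVec Y ⬝ᵥ v := rfl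
      _ = Y ⬝ᵥ P.mulVec v := symm_dot P hPsymm Y v
      _ = Y ⬝ᵥ (P * P).mulVec Y := by rw [hv, Matrix.mulVec_mulVec]
      _ = Y ⬝ᵥ v := by rw [hPidem, ← hv]
    rw [dotProduct_comm, ← h1]
  have hvne : v ≠ 0 := by
    intro h
    apply hY
    have : Y - (Qp * Q).mulVec Y = 0 := by
      simpa [hv, hP, Matrix.sub_mulVec, Matrix.one_mulVec] using h
    have := sub_eq_zero.mp this
    exact this.symm
  have hQv : Q.mulVec v = 0 := by
    rw [hv, Matrix.mulVec_mulVec, hQP, Matrix.zero_mulVec]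
  set c : ℝ := v ⬝ᵥ v with hc
  have hcpos : 0 < c := by
    have := Matrix.dotProduct_star_self_pos_iff (R := ℝ) (v := v)
    simp only [star_trivial] at this
    exact this.mpr hvne
  -- key lower bound: for γ > 0, Y ⬝ᵥ (γ•1+Q)⁻¹ Y ≥ c / γ
  have key : ∀ γ : ℝ, 0 < γ →
      c / γ ≤ Y ⬝ᵥ (γ • (1 : Matrix (Fin q) (Fin q) ℝ) + Q)⁻¹.mulVec Y := by
    intro γ hγ
    set A : Matrix (Fin q) (Fin q) ℝ := γ • 1 + Q with hA
    have hApd : A.PosDef := by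
      refine Matrix.PosDef.add_posSemidef ?_ hQ
      refine Matrix.PosDef.of_dotProduct_mulVec_pos ?_ (fun x hx => ?_)
      · simp [Matrix.IsHermitian, Matrix.conjTranspose_smul]
      · have hx' : (0:ℝ) < star x ⬝ᵥ x := Matrix.dotProduct_star_self_pos_iff.mpr hx
        simp only [star_trivial] at hx'
        have : (γ • (1 : Matrix (Fin q) (Fin q) ℝ)).mulVec x = γ • x := by
          simp [Matrix.smul_mulVec, Matrix.one_mulVec]
        rw [this]
        simpa [dotProduct_smul, smul_eq_mul, star_trivial] using mul_pos hγ hx'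
    have hdet : IsUnit A.det := hApd.det_pos.ne'.isUnit
    have hinv : A * A⁻¹ = 1 := Matrix.mul_nonsing_inv A hdet
    set w : Fin q → ℝ := A⁻¹.mulVec Y with hw
    have hAw : A.mulVec w = Y := by
      rw [hw, Matrix.mulVec_mulVec, hinv, Matrix.one_mulVec]
    -- Cauchy–Schwarz with x = v, y = w
    have hcs := psd_cauchy_schwarz hApd.posSemidef v w
    have hvAw : v ⬝ᵥ A.mulVec w = c := by rw [hAw, hvY, hc]
    have hvAv : v ⬝ᵥ A.mulVec v = γ * c := by
      rw [hA, Matrix.add_mulVec, hQv, add_zero]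
      simp [Matrix.smul_mulVec, Matrix.one_mulVec, dotProduct_smul, hc]
    have hwAw : w ⬝ᵥ A.mulVec w = Y ⬝ᵥ w := by
      rw [hAw, dotProduct_comm]
    rw [hvAw, hvAv, hwAw] at hcs
    have hle : c ^ 2 / (γ * c) ≤ Y ⬝ᵥ w := by
      rw [div_le_iff₀ (by positivity)]
      nlinarith [hcs]
    calc c / γ = c ^ 2 / (γ * c) := by field_simp
    _ ≤ Y ⬝ᵥ w := hle
    _ = Y ⬝ᵥ A⁻¹.mulVec Y := rfl
  -- conclude the limit
  have htend : Tendsto (fun γ : ℝ => (1/2) * (c / γ)) (𝓝[>] (0:ℝ)) atTop := by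
    have h1 : Tendsto (fun γ : ℝ => γ⁻¹) (𝓝[>] (0:ℝ)) atTop := tendsto_inv_nhdsGT_zero
    have h2 : Tendsto (fun γ : ℝ => (c/2) * γ⁻¹) (𝓝[>] (0:ℝ)) atTop :=
      h1.const_mul_atTop (by positivity)
    refine h2.congr fun γ => by ring
  refine tendsto_atTop_mono' _ ?_ htend
  filter_upwards [self_mem_nhdsWithin] with γ hγ
  have := key γ hγ
  have : (1/2 : ℝ) * (c / γ) ≤ (1/2) * (Y ⬝ᵥ (γ • (1 : Matrix (Fin q) (Fin q) ℝ) + Q)⁻¹.mulVec Y) := by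
    linarith
  exact this
end

section
/- Let Λ, Γ be positive definite d×d real matrices and σ a d×d real matrix with σᵀσ positive definite. Define the 2d×2d block matrices A = [[0, I],[−Λ, −Γ]] and B = [[0,0],[0,σ]]. Then the matrix D' = BBᵀ + AᵀBBᵀA is nonsingular. -/
open Matrix

private lemma quad_eq {n m : ℕ} (C : Matrix (Fin n ⊕ Fin n) (Fin m ⊕ Fin m) ℝ)
    (x : Fin m ⊕ Fin m → ℝ) :
    x ⬝ᵥ ((Cᵀ * C) *ᵥ x) = (C *ᵥ x) ⬝ᵥ (C *ᵥ x) := by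
  rw [← mulVec_mulVec, dotProduct_mulVec, vecMul_transpose]

private lemma dp_nonneg {n : Type*} [Fintype n] (v : n → ℝ) : 0 ≤ v ⬝ᵥ v :=
  Finset.sum_nonneg fun i _ => mul_self_nonneg _

/-- For positive definite `Λ`, `Γ` and `σᵀσ`, with block matrices
`A = [[0, I],[−Λ, −Γ]]`, `B = [[0,0],[0,σ]]`, the matrix `D' = BBᵀ + AᵀBBᵀA` is nonsingular. -/
theorem stmt2 {d : ℕ} (Λ Γ σ : Matrix (Fin d) (Fin d) ℝ)
    (hΛ : Λ.PosDef) (hΓ : Γ.PosDef) (hσ : (σᵀ * σ).PosDef)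
    (A B : Matrix (Fin d ⊕ Fin d) (Fin d ⊕ Fin d) ℝ)
    (hA : A = Matrix.fromBlocks 0 1 (-Λ) (-Γ))
    (hB : B = Matrix.fromBlocks 0 0 0 σ) :
    IsUnit (B * Bᵀ + Aᵀ * (B * Bᵀ) * A) := by
  -- σ is invertible
  have hdetσ : σ.det ≠ 0 := by
    intro h
    have := hσ.det_pos
    rw [det_mul, det_transpose, h, mul_zero] at this
    exact lt_irrefl 0 this
  have hσT_inj : Function.Injective (σᵀ.mulVec) :=
    mulVec_injective_iff_isUnit.mpr
      ((isUnit_iff_isUnit_det _).mpr (by simpa [det_transpose] using hdetσ.isUnit))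
  have hΛ_inj : Function.Injective (Λ.mulVec) :=
    mulVec_injective_iff_isUnit.mpr hΛ.isUnit
  -- the matrix is positive definite
  have key : (B * Bᵀ + Aᵀ * (B * Bᵀ) * A).PosDef := by
    have hrw : B * Bᵀ + Aᵀ * (B * Bᵀ) * A = Bᵀᵀ * Bᵀ + (Bᵀ * A)ᵀ * (Bᵀ * A) := by
      rw [transpose_mul, transpose_transpose]
      simp [Matrix.mul_assoc]
    rw [posDef_iff_dotProduct_mulVec]
    constructor
    · -- Hermitian
      rw [hrw, ← conjTranspose_eq_transpose_of_trivial Bᵀ, ← conjTranspose_eq_transpose_of_trivial (Bᵀ * A)]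
      exact (isHermitian_conjTranspose_mul_self _).add (isHermitian_conjTranspose_mul_self _)
    · intro x hx
      rw [hrw, Matrix.add_mulVec, dotProduct_add]
      simp only [star_trivial, RCLike.re_to_real]
      rw [quad_eq, quad_eq]
      rcases lt_or_eq_of_le (dp_nonneg (Bᵀ *ᵥ x)) with h1 | h1
      · exact add_pos_of_pos_of_nonneg h1 (dp_nonneg _)
      rcases lt_or_eq_of_le (dp_nonneg ((Bᵀ * A) *ᵥ x)) with h2 | h2
      · exact add_pos_of_nonneg_of_pos (dp_nonneg _) h2
      -- both quadratic terms vanish: derive x = 0, contradiction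
      exfalso
      apply hx
      have hz1 : Bᵀ *ᵥ x = 0 := dotProduct_self_eq_zero.mp h1.symm
      have hz2 : Bᵀ *ᵥ (A *ᵥ x) = 0 := by
        rw [mulVec_mulVec]; exact dotProduct_self_eq_zero.mp h2.symm
      have hBT : Bᵀ = Matrix.fromBlocks 0 0 0 σᵀ := by
        rw [hB, fromBlocks_transpose, transpose_zero]
      -- extract block components
      rw [hBT, fromBlocks_mulVec] at hz1
      have hv : σᵀ *ᵥ (x ∘ Sum.inr) = 0 := by
        have h := fun i => congrFun hz1 (Sum.inr i)
        simp only [Sum.elim_inr, Matrix.zero_mulVec, zero_add, Pi.zero_apply] at h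
        exact funext h
      have hv0 : x ∘ Sum.inr = 0 := hσT_inj (by rw [hv, mulVec_zero])
      -- second condition
      rw [hA, fromBlocks_mulVec, hBT, fromBlocks_mulVec] at hz2
      have hu : σᵀ *ᵥ ((-Λ) *ᵥ (x ∘ Sum.inl) + (-Γ) *ᵥ (x ∘ Sum.inr)) = 0 := by
        have h := fun i => congrFun hz2 (Sum.inr i)
        simp only [Sum.elim_inr, Sum.elim_comp_inl, Sum.elim_comp_inr,
          Matrix.zero_mulVec, zero_add, Pi.zero_apply] at h
        exact funext h
      rw [hv0, mulVec_zero, add_zero] at hu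
      have hΛu : Λ *ᵥ (x ∘ Sum.inl) = 0 := by
        have : (-Λ) *ᵥ (x ∘ Sum.inl) = 0 := hσT_inj (by rw [hu, mulVec_zero])
        rw [neg_mulVec] at this
        simpa using this
      have hu0 : x ∘ Sum.inl = 0 := hΛ_inj (by rw [hΛu, mulVec_zero])
      ext i
      cases i with
      | inl i => exact congrFun hu0 i
      | inr i => exact congrFun hv0 i
  exact key.isUnit
end
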